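/- arXiv:1407.4517 — 2 statements merged into one kernel-verified Lean document; each statement's English description precedes it below -/
import Mathlib

section
/- Let $B$ be a ball in $\mathbb{R}^n$, $n \ge 3$, let $a, b \in (0,n)$ and $\sigma > \frac{a}{n-b}$. Then there exists a constant $C = C(n,\sigma,a,b) > 0$ such that for every nonnegative $f \in L^\infty(B)$, $\|\mathbf{U}_{a,b,\sigma} f\|_{L^\infty(B)} \le C \|f\|_{L^1(B)}^{(a+b\sigma)/n} \|f\|_{L^\infty(B)}^{(\sigma(n-b)-a)/n}$. -/
/-!
Hedberg's argument. Put `Λ = ‖f‖₁`, `Θ = ‖f‖_∞` and choose `ρ` with `ρ ^ n = Λ / Θ`. Splitting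
`I_b f (y)` at radius `ρ` around `y` gives the uniform bound `I_b f ≲ Θ ρ ^ b`. On `B(x, ρ)` this
bound together with `∫_{B(x, ρ)} |x - y| ^ (a - n) dy ≲ ρ ^ a` handles `U f (x)`. Away from `x`, fix
`τ ≤ σ` with `a < τ (n - b) < n` and write `(I_b f) ^ σ ≤ (Θ ρ ^ b) ^ (σ - τ) (I_b f) ^ τ`. By
Fubini and Jensen (Hölder) `(I_b f) ^ τ` satisfies the Morrey bound
`∫_{B(w, t)} (I_b f) ^ τ ≲ t ^ (n - τ (n - b)) Λ ^ τ`, and summing over the dyadic annuli around `x`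
outside `B(x, ρ)` gives `≲ ρ ^ (a - τ (n - b)) Λ ^ τ`. Both parts are `≲ Θ ^ σ ρ ^ (a + b σ)`, which
is `Λ ^ ((a + b σ) / n) Θ ^ ((σ (n - b) - a) / n)`.
-/

open MeasureTheory Metric Set Module
open scoped ENNReal

noncomputable section

section Jensen

variable {Ω : Type*} [MeasurableSpace Ω] {μ : Measure Ω}

theorem lintegral_rpow_le_of_le_one {τ : ℝ} (hτ0 : 0 < τ) (hτ1 : τ ≤ 1) {G : Ω → ℝ≥0∞}
    (hG : AEMeasurable G μ) :
    ∫⁻ a, G a ^ τ ∂μ ≤ (∫⁻ a, G a ∂μ) ^ τ * μ univ ^ (1 - τ) := by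
  have h := eLpNorm'_le_eLpNorm'_mul_rpow_measure_univ hτ0 hτ1 hG.aestronglyMeasurable
  simp only [eLpNorm'_eq_lintegral_enorm, enorm_eq_self, ENNReal.rpow_one, div_one] at h
  calc ∫⁻ a, G a ^ τ ∂μ = ((∫⁻ a, G a ^ τ ∂μ) ^ (1 / τ)) ^ τ := by
        rw [← ENNReal.rpow_mul, one_div_mul_cancel hτ0.ne', ENNReal.rpow_one]
    _ ≤ ((∫⁻ a, G a ∂μ) * μ univ ^ (1 / τ - 1)) ^ τ := by gcongr
    _ = (∫⁻ a, G a ∂μ) ^ τ * μ univ ^ (1 - τ) := by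
        rw [ENNReal.mul_rpow_of_nonneg _ _ hτ0.le, ← ENNReal.rpow_mul]
        congr 2
        field_simp

theorem rpow_lintegral_mul_le_of_one_le {τ : ℝ} (hτ : 1 ≤ τ) {F k : Ω → ℝ≥0∞}
    (hF : Measurable F) (hk : Measurable k) :
    (∫⁻ a, F a * k a ∂μ) ^ τ ≤ (∫⁻ a, F a * k a ^ τ ∂μ) * (∫⁻ a, F a ∂μ) ^ (τ - 1) := by
  have hτ0 : 0 < τ := one_pos.trans_le hτ
  have h := eLpNorm'_le_eLpNorm'_mul_rpow_measure_univ (μ := μ.withDensity F) one_pos hτ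
    hk.aestronglyMeasurable
  simp only [eLpNorm'_eq_lintegral_enorm, enorm_eq_self, ENNReal.rpow_one, div_one,
    withDensity_apply _ MeasurableSet.univ, Measure.restrict_univ,
    lintegral_withDensity_eq_lintegral_mul _ hF hk,
    lintegral_withDensity_eq_lintegral_mul _ hF (hk.pow_const τ)] at h
  calc (∫⁻ a, F a * k a ∂μ) ^ τ
      ≤ ((∫⁻ a, F a * k a ^ τ ∂μ) ^ (1 / τ) * (∫⁻ a, F a ∂μ) ^ (1 - 1 / τ)) ^ τ := by
        gcongr; simpa only [Pi.mul_apply] using h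
    _ = (∫⁻ a, F a * k a ^ τ ∂μ) * (∫⁻ a, F a ∂μ) ^ (τ - 1) := by
        rw [ENNReal.mul_rpow_of_nonneg _ _ hτ0.le, ← ENNReal.rpow_mul, ← ENNReal.rpow_mul,
          one_div_mul_cancel hτ0.ne', ENNReal.rpow_one]
        congr 2
        field_simp

end Jensen

theorem exists_pos_ofReal_rpow_eq {X : ℝ≥0∞} (hX0 : X ≠ 0) (hXt : X ≠ ∞) {d : ℝ} :
    ∃ ρ : ℝ, 0 < ρ ∧ ∀ u, ENNReal.ofReal (ρ ^ u) = X ^ (u / d) := by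
  have hX : 0 < X.toReal := ENNReal.toReal_pos hX0 hXt
  refine ⟨X.toReal ^ (1 / d), Real.rpow_pos_of_pos hX _, fun u => ?_⟩
  rw [← Real.rpow_mul hX.le, ← ENNReal.ofReal_rpow_of_pos hX, ENNReal.ofReal_toReal hXt,
    one_div_mul_eq_div]

theorem rpow_mul_div_rpow_eq_rpow_mul_rpow_sub {Λ Θ : ℝ≥0∞} (hΘ0 : Θ ≠ 0) (hΘt : Θ ≠ ∞)
    {σ p : ℝ} (hp : 0 ≤ p) : Θ ^ σ * (Λ / Θ) ^ p = Λ ^ p * Θ ^ (σ - p) := by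
  rw [ENNReal.div_rpow_of_nonneg _ _ hp, div_eq_mul_inv, ← ENNReal.rpow_neg, sub_eq_add_neg,
    ENNReal.rpow_add _ _ hΘ0 hΘt]
  ring

section Dyadic

variable {X : Type*} [PseudoMetricSpace X] [MeasurableSpace X] [OpensMeasurableSpace X]
  {ν : Measure X} {g : X → ℝ≥0∞} {x : X}

theorem setLIntegral_annulus_mul_rpow_neg_le {s α e : ℝ} {P : ℝ≥0∞} (hs : 0 < s) (hα : 0 ≤ α)
    (hg : ∫⁻ y in closedBall x (2 * s), g y ∂ν ≤ ENNReal.ofReal ((2 * s) ^ e) * P) :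
    ∫⁻ y in closedBall x (2 * s) \ ball x s, g y * ENNReal.ofReal (dist x y ^ (-α)) ∂ν ≤
      ENNReal.ofReal (2 ^ e * s ^ (e - α)) * P :=
  calc ∫⁻ y in closedBall x (2 * s) \ ball x s, g y * ENNReal.ofReal (dist x y ^ (-α)) ∂ν
      ≤ ∫⁻ y in closedBall x (2 * s) \ ball x s, g y * ENNReal.ofReal (s ^ (-α)) ∂ν := by
        refine setLIntegral_mono' (measurableSet_closedBall.diff measurableSet_ball)
          fun y hy => mul_le_mul_right (ENNReal.ofReal_le_ofReal ?_) _
        have hsy : s ≤ dist x y := by simpa [dist_comm] using hy.2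
        exact Real.rpow_le_rpow_of_nonpos hs hsy (by linarith)
    _ ≤ (∫⁻ y in closedBall x (2 * s), g y ∂ν) * ENNReal.ofReal (s ^ (-α)) := by
        rw [lintegral_mul_const' _ _ ENNReal.ofReal_ne_top]
        gcongr
        exact sdiff_subset
    _ ≤ ENNReal.ofReal ((2 * s) ^ e) * P * ENNReal.ofReal (s ^ (-α)) := by gcongr
    _ = ENNReal.ofReal (2 ^ e * s ^ (e - α)) * P := by
        rw [mul_right_comm, ← ENNReal.ofReal_mul (by positivity), Real.mul_rpow zero_le_two hs.le,
          mul_assoc, ← Real.rpow_add hs, ← sub_eq_add_neg]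

theorem setLIntegral_mul_rpow_neg_le_tsum {S : Set X} {q s₀ α e : ℝ} {P : ℝ≥0∞}
    (hq : 0 < q) (hs₀ : 0 < s₀) (hα : 0 < α) (hS : MeasurableSet S)
    (hcover : ∀ y ∈ S, 0 < dist x y →
      ∃ j : ℕ, y ∈ closedBall x (2 * (s₀ * q ^ j)) \ ball x (s₀ * q ^ j))
    (hg : ∀ t > 0, ∫⁻ y in closedBall x t, g y ∂ν ≤ ENNReal.ofReal (t ^ e) * P) :
    ∫⁻ y in S, g y * ENNReal.ofReal (dist x y ^ (-α)) ∂ν ≤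
      ENNReal.ofReal (2 ^ e * s₀ ^ (e - α)) * (∑' j : ℕ, ENNReal.ofReal (q ^ (e - α)) ^ j) *
        P := by
  set A : ℕ → Set X := fun j => closedBall x (2 * (s₀ * q ^ j)) \ ball x (s₀ * q ^ j)
  set h : X → ℝ≥0∞ := fun y => g y * ENNReal.ofReal (dist x y ^ (-α))
  have hA : MeasurableSet (⋃ j, A j) :=
    MeasurableSet.iUnion fun j => measurableSet_closedBall.diff measurableSet_ball
  have hannulus : ∀ j, ∫⁻ y in A j, h y ∂ν ≤
      ENNReal.ofReal (2 ^ e * s₀ ^ (e - α)) * ENNReal.ofReal (q ^ (e - α)) ^ j * P := fun j => by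
    have hs : 0 < s₀ * q ^ j := by positivity
    refine (setLIntegral_annulus_mul_rpow_neg_le hs hα.le (hg _ (by positivity))).trans_eq ?_
    rw [← ENNReal.ofReal_pow (by positivity), ← ENNReal.ofReal_mul (by positivity),
      Real.mul_rpow hs₀.le (by positivity), Real.rpow_pow_comm hq.le, mul_assoc]
  calc ∫⁻ y in S, h y ∂ν ≤ ∫⁻ y in S, (⋃ j, A j).indicator h y ∂ν := by
        refine setLIntegral_mono' hS fun y hy => ?_
        rcases (dist_nonneg (x := x) (y := y)).eq_or_lt with h0 | h0
        -- junk value `0 ^ (-α) = 0`: the centre contributes nothing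
        · simp [h, ← h0, Real.zero_rpow (neg_ne_zero.2 hα.ne')]
        · rw [indicator_of_mem (mem_iUnion.2 (hcover y hy h0))]
    _ ≤ ∫⁻ y in ⋃ j, A j, h y ∂ν := by
        rw [← lintegral_indicator hA]
        exact setLIntegral_le_lintegral _ _
    _ ≤ ∑' j, ∫⁻ y in A j, h y ∂ν := lintegral_iUnion_le _ _
    _ ≤ ∑' j, ENNReal.ofReal (2 ^ e * s₀ ^ (e - α)) * ENNReal.ofReal (q ^ (e - α)) ^ j * P :=
        ENNReal.tsum_le_tsum hannulus
    _ = _ := by rw [ENNReal.tsum_mul_right, ENNReal.tsum_mul_left]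

theorem exists_setLIntegral_closedBall_mul_rpow_neg_le {e α : ℝ} (hα : 0 < α) (hαe : α < e) :
    ∃ C : ℝ≥0∞, C ≠ ∞ ∧ ∀ (ν : Measure X) (g : X → ℝ≥0∞) (x : X) (P : ℝ≥0∞),
      (∀ t > 0, ∫⁻ y in closedBall x t, g y ∂ν ≤ ENNReal.ofReal (t ^ e) * P) →
      ∀ ρ > 0, ∫⁻ y in closedBall x ρ, g y * ENNReal.ofReal (dist x y ^ (-α)) ∂ν ≤
        C * ENNReal.ofReal (ρ ^ (e - α)) * P := by
  have hr : ENNReal.ofReal ((2⁻¹ : ℝ) ^ (e - α)) < 1 :=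
    ENNReal.ofReal_lt_one.2 (Real.rpow_lt_one (by norm_num) (by norm_num) (by linarith))
  refine ⟨ENNReal.ofReal (2 ^ e * 2⁻¹ ^ (e - α)) * ∑' j : ℕ, ENNReal.ofReal (2⁻¹ ^ (e - α)) ^ j,
    ENNReal.mul_ne_top ENNReal.ofReal_ne_top (tsum_geometric_lt_top.2 hr).ne,
    fun ν g x P hg ρ hρ => ?_⟩
  refine (setLIntegral_mul_rpow_neg_le_tsum (q := 2⁻¹) (s₀ := 2⁻¹ * ρ) (by norm_num)
    (by positivity) hα measurableSet_closedBall (fun y hy hxy => ?_) hg).trans_eq ?_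
  · have hyρ : dist x y ≤ ρ := by simpa [dist_comm] using hy
    obtain ⟨j, hj, hj'⟩ := exists_nat_pow_near ((one_le_div hxy).2 hyρ) one_lt_two
    rw [le_div_iff₀ hxy] at hj
    rw [div_lt_iff₀ hxy, pow_succ] at hj'
    refine ⟨j, ?_, ?_⟩
    · rw [mem_closedBall, dist_comm, inv_pow]
      field_simp
      linarith
    · rw [mem_ball, dist_comm, not_lt, inv_pow]
      field_simp
      linarith
  · rw [Real.mul_rpow (by norm_num) hρ.le, ← mul_assoc, ENNReal.ofReal_mul (by positivity)]
    ring

theorem exists_setLIntegral_compl_ball_mul_rpow_neg_le {e α : ℝ} (hα : 0 < α) (heα : e < α) :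
    ∃ C : ℝ≥0∞, C ≠ ∞ ∧ ∀ (ν : Measure X) (g : X → ℝ≥0∞) (x : X) (P : ℝ≥0∞),
      (∀ t > 0, ∫⁻ y in closedBall x t, g y ∂ν ≤ ENNReal.ofReal (t ^ e) * P) →
      ∀ ρ > 0, ∫⁻ y in (ball x ρ)ᶜ, g y * ENNReal.ofReal (dist x y ^ (-α)) ∂ν ≤
        C * ENNReal.ofReal (ρ ^ (e - α)) * P := by
  have hr : ENNReal.ofReal ((2 : ℝ) ^ (e - α)) < 1 :=
    ENNReal.ofReal_lt_one.2 (Real.rpow_lt_one_of_one_lt_of_neg one_lt_two (by linarith))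
  refine ⟨ENNReal.ofReal (2 ^ e) * ∑' j : ℕ, ENNReal.ofReal (2 ^ (e - α)) ^ j,
    ENNReal.mul_ne_top ENNReal.ofReal_ne_top (tsum_geometric_lt_top.2 hr).ne,
    fun ν g x P hg ρ hρ => ?_⟩
  refine (setLIntegral_mul_rpow_neg_le_tsum (q := 2) (s₀ := ρ) two_pos hρ hα
    measurableSet_ball.compl (fun y hy _ => ?_) hg).trans_eq ?_
  · have hρy : ρ ≤ dist x y := by simpa [dist_comm] using hy
    obtain ⟨j, hj, hj'⟩ := exists_nat_pow_near ((one_le_div hρ).2 hρy) one_lt_two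
    rw [le_div_iff₀ hρ] at hj
    rw [div_lt_iff₀ hρ, pow_succ] at hj'
    refine ⟨j, ?_, ?_⟩
    · rw [mem_closedBall, dist_comm]
      linarith
    · rw [mem_ball, dist_comm, not_lt]
      linarith
  · rw [ENNReal.ofReal_mul (by positivity)]
    ring

theorem exists_setLIntegral_compl_ball_rpow_mul_rpow_neg_le {e α σ τ : ℝ} (hα : 0 < α)
    (heα : e < α) (hτ : 0 ≤ τ) (hτσ : τ ≤ σ) :
    ∃ C : ℝ≥0∞, C ≠ ∞ ∧ ∀ (ν : Measure X) (G : X → ℝ≥0∞) (K P : ℝ≥0∞) (x : X), Measurable G →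
      (∀ y, G y ≤ K) →
      (∀ t > 0, ∫⁻ y in closedBall x t, G y ^ τ ∂ν ≤ ENNReal.ofReal (t ^ e) * P) →
      ∀ ρ > 0, ∫⁻ y in (ball x ρ)ᶜ, G y ^ σ * ENNReal.ofReal (dist x y ^ (-α)) ∂ν ≤
        C * K ^ (σ - τ) * ENNReal.ofReal (ρ ^ (e - α)) * P := by
  obtain ⟨C, hC, h⟩ := exists_setLIntegral_compl_ball_mul_rpow_neg_le (X := X) hα heα
  refine ⟨C, hC, fun ν G K P x hGm hG hmorrey ρ hρ => ?_⟩
  calc ∫⁻ y in (ball x ρ)ᶜ, G y ^ σ * ENNReal.ofReal (dist x y ^ (-α)) ∂ν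
      ≤ ∫⁻ y in (ball x ρ)ᶜ, K ^ (σ - τ) * (G y ^ τ * ENNReal.ofReal (dist x y ^ (-α))) ∂ν := by
        refine lintegral_mono fun y => ?_
        have hsplit := ENNReal.rpow_add_of_nonneg (x := G y) _ _ (sub_nonneg.2 hτσ) hτ
        rw [sub_add_cancel] at hsplit
        rw [hsplit, mul_assoc]
        gcongr
        exact hG y
    _ = K ^ (σ - τ) *
          ∫⁻ y in (ball x ρ)ᶜ, G y ^ τ * ENNReal.ofReal (dist x y ^ (-α)) ∂ν :=
        lintegral_const_mul _ ((hGm.pow_const τ).mul (by fun_prop))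
    _ ≤ K ^ (σ - τ) * (C * ENNReal.ofReal (ρ ^ (e - α)) * P) := by
        gcongr
        exact h ν (fun y => G y ^ τ) x P hmorrey ρ hρ
    _ = C * K ^ (σ - τ) * ENNReal.ofReal (ρ ^ (e - α)) * P := by ring

end Dyadic

theorem exists_le_and_mul_mem_Ioo {a β σ d : ℝ} (ha : 0 < a) (had : a < d) (hβ : 0 < β)
    (hσ : a < σ * β) : ∃ τ, 0 < τ ∧ τ ≤ σ ∧ τ * β ∈ Ioo a d := by
  have hmin : min σ ((a + d) / 2 / β) * β = min (σ * β) ((a + d) / 2) := by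
    rw [min_mul_of_nonneg _ _ hβ.le, div_mul_cancel₀ _ hβ.ne']
  have hlt : a < min σ ((a + d) / 2 / β) * β := by
    rw [hmin]
    exact lt_min hσ (by linarith)
  refine ⟨min σ ((a + d) / 2 / β), pos_of_mul_pos_left (ha.trans hlt) hβ.le, min_le_left _ _,
    hlt, ?_⟩
  rw [hmin]
  exact (min_le_right _ _).trans_lt (by linarith)

/-- The paper's `I_c f` on a ball `B` is `rieszPotential (volume.restrict B) (n - c) f`. On the
diagonal the kernel takes the junk value `0 ^ (-β) = 0` rather than `∞`, which no non-atomic `ν`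
sees. -/
def rieszPotential {X : Type*} [PseudoMetricSpace X] [MeasurableSpace X] (ν : Measure X) (β : ℝ)
    (F : X → ℝ≥0∞) (y : X) : ℝ≥0∞ :=
  ∫⁻ z, F z * ENNReal.ofReal (dist y z ^ (-β)) ∂ν

theorem rieszPotential_congr_ae {X : Type*} [PseudoMetricSpace X] [MeasurableSpace X]
    {ν : Measure X} {F F' : X → ℝ≥0∞} (h : F =ᵐ[ν] F') (β : ℝ) :
    rieszPotential ν β F = rieszPotential ν β F' :=
  funext fun _ => lintegral_congr_ae (h.mono fun z hz => by simp only [hz])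

section Euclidean

variable {E : Type*} [NormedAddCommGroup E] [NormedSpace ℝ E] [FiniteDimensional ℝ E]
  [MeasurableSpace E] [BorelSpace E] {μ : Measure E} [μ.IsAddHaarMeasure]

theorem exists_setLIntegral_closedBall_rpow_neg_le {γ : ℝ} (hγ : 0 < γ)
    (hγd : γ < finrank ℝ E) :
    ∃ C : ℝ≥0∞, C ≠ ∞ ∧ ∀ ν ≤ μ, ∀ (x : E) (t : ℝ), 0 < t →
      ∫⁻ y in closedBall x t, ENNReal.ofReal (dist x y ^ (-γ)) ∂ν ≤
        C * ENNReal.ofReal (t ^ ((finrank ℝ E : ℝ) - γ)) := by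
  obtain ⟨C, hC, h⟩ := exists_setLIntegral_closedBall_mul_rpow_neg_le (X := E) hγ hγd
  refine ⟨C * μ (ball 0 1), ENNReal.mul_ne_top hC measure_ball_lt_top.ne,
    fun ν hν x t ht => ?_⟩
  have hvol : ∀ s > 0, ∫⁻ y in closedBall x s, 1 ∂μ ≤
      ENNReal.ofReal (s ^ (finrank ℝ E : ℝ)) * μ (ball 0 1) := fun s hs => by
    rw [setLIntegral_one, Measure.addHaar_closedBall μ x hs.le, Real.rpow_natCast]
  calc ∫⁻ y in closedBall x t, ENNReal.ofReal (dist x y ^ (-γ)) ∂ν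
      ≤ ∫⁻ y in closedBall x t, 1 * ENNReal.ofReal (dist x y ^ (-γ)) ∂μ := by
        simp only [one_mul]
        exact lintegral_mono' (Measure.restrict_mono subset_rfl hν) le_rfl
    _ ≤ C * ENNReal.ofReal (t ^ ((finrank ℝ E : ℝ) - γ)) * μ (ball 0 1) := h μ _ x _ hvol t ht
    _ = _ := by ring

theorem exists_setLIntegral_closedBall_dist_rpow_neg_le {γ : ℝ} (hγ : 0 < γ)
    (hγd : γ < finrank ℝ E) :
    ∃ C : ℝ≥0∞, C ≠ ∞ ∧ ∀ ν ≤ μ, ∀ (w z : E) (t : ℝ), 0 < t →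
      ∫⁻ y in closedBall w t, ENNReal.ofReal (dist y z ^ (-γ)) ∂ν ≤
        C * ENNReal.ofReal (t ^ ((finrank ℝ E : ℝ) - γ)) := by
  obtain ⟨C, hC, h⟩ := exists_setLIntegral_closedBall_rpow_neg_le (μ := μ) hγ hγd
  refine ⟨C + μ (ball 0 1), ENNReal.add_ne_top.2 ⟨hC, measure_ball_lt_top.ne⟩,
    fun ν hν w z t ht => ?_⟩
  set k : E → ℝ≥0∞ := fun y => ENNReal.ofReal (dist y z ^ (-γ))
  have hk : ∀ y, k y ≤ (closedBall z t).indicator k y + ENNReal.ofReal (t ^ (-γ)) := by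
    intro y
    by_cases hy : y ∈ closedBall z t
    · simp [indicator_of_mem hy]
    · rw [indicator_of_notMem hy, zero_add]
      exact ENNReal.ofReal_le_ofReal
        (Real.rpow_le_rpow_of_nonpos ht (not_le.1 hy).le (by linarith))
  calc ∫⁻ y in closedBall w t, k y ∂ν
      ≤ ∫⁻ y in closedBall w t, ((closedBall z t).indicator k y + ENNReal.ofReal (t ^ (-γ))) ∂ν :=
        lintegral_mono hk
    _ ≤ ∫⁻ y in closedBall z t, k y ∂ν + ENNReal.ofReal (t ^ (-γ)) * μ (closedBall w t) := by
        rw [lintegral_add_right _ measurable_const, setLIntegral_const]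
        exact add_le_add ((setLIntegral_le_lintegral _ _).trans_eq
          (lintegral_indicator measurableSet_closedBall _)) (mul_le_mul_right (hν _) _)
    _ ≤ C * ENNReal.ofReal (t ^ ((finrank ℝ E : ℝ) - γ)) +
          ENNReal.ofReal (t ^ (-γ)) * (ENNReal.ofReal (t ^ (finrank ℝ E : ℝ)) * μ (ball 0 1)) := by
        gcongr
        · simpa only [k, dist_comm] using h ν hν z t ht
        · rw [Measure.addHaar_closedBall μ w ht.le, Real.rpow_natCast]
    _ = (C + μ (ball 0 1)) * ENNReal.ofReal (t ^ ((finrank ℝ E : ℝ) - γ)) := by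
        rw [← mul_assoc, ← ENNReal.ofReal_mul (by positivity), ← Real.rpow_add ht]
        ring_nf

theorem measurable_rieszPotential {ν : Measure E} [SFinite ν] {F : E → ℝ≥0∞} (hF : Measurable F)
    (β : ℝ) : Measurable (rieszPotential ν β F) :=
  Measurable.lintegral_prod_right'
    ((hF.comp measurable_snd).mul (measurable_dist.pow_const _).ennreal_ofReal)

theorem exists_setLIntegral_rieszPotential_le {γ : ℝ} (hγ : 0 < γ) (hγd : γ < finrank ℝ E) :
    ∃ C : ℝ≥0∞, C ≠ ∞ ∧ ∀ (ν : Measure E) [SFinite ν], ν ≤ μ → ∀ F : E → ℝ≥0∞, Measurable F →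
      ∀ (w : E) (t : ℝ), 0 < t → ∫⁻ y in closedBall w t, rieszPotential ν γ F y ∂ν ≤
        C * ENNReal.ofReal (t ^ ((finrank ℝ E : ℝ) - γ)) * ∫⁻ z, F z ∂ν := by
  obtain ⟨C, hC, h⟩ := exists_setLIntegral_closedBall_dist_rpow_neg_le (μ := μ) hγ hγd
  refine ⟨C, hC, fun ν _ hν F hF w t ht => ?_⟩
  calc ∫⁻ y in closedBall w t, rieszPotential ν γ F y ∂ν
      = ∫⁻ z, F z * ∫⁻ y in closedBall w t, ENNReal.ofReal (dist y z ^ (-γ)) ∂ν ∂ν := by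
        simp only [rieszPotential]
        rw [lintegral_lintegral_swap ((hF.comp measurable_snd).mul
          (measurable_dist.pow_const _).ennreal_ofReal).aemeasurable]
        congr 1 with z
        exact lintegral_const_mul _ (by fun_prop)
    _ ≤ ∫⁻ z, F z * (C * ENNReal.ofReal (t ^ ((finrank ℝ E : ℝ) - γ))) ∂ν := by
        gcongr with z
        exact h ν hν w z t ht
    _ = _ := by rw [lintegral_mul_const _ hF, mul_comm]

theorem exists_setLIntegral_rieszPotential_rpow_le_of_le_one {β τ : ℝ} (hβ : 0 < β)
    (hβd : β < finrank ℝ E) (hτ : 0 < τ) (hτ1 : τ ≤ 1) :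
    ∃ C : ℝ≥0∞, C ≠ ∞ ∧ ∀ (ν : Measure E) [SFinite ν], ν ≤ μ → ∀ F : E → ℝ≥0∞, Measurable F →
      ∀ (w : E) (t : ℝ), 0 < t → ∫⁻ y in closedBall w t, rieszPotential ν β F y ^ τ ∂ν ≤
        C * ENNReal.ofReal (t ^ ((finrank ℝ E : ℝ) - τ * β)) * (∫⁻ z, F z ∂ν) ^ τ := by
  set d : ℝ := (finrank ℝ E : ℝ)
  obtain ⟨C, hC, h⟩ := exists_setLIntegral_rieszPotential_le (μ := μ) hβ hβd
  refine ⟨C ^ τ * μ (ball 0 1) ^ (1 - τ), ENNReal.mul_ne_top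
    (ENNReal.rpow_ne_top_of_nonneg hτ.le hC)
    (ENNReal.rpow_ne_top_of_nonneg (by linarith) measure_ball_lt_top.ne),
    fun ν _ hν F hF w t ht => ?_⟩
  have hT : ENNReal.ofReal t ≠ 0 := by simpa using ht
  calc ∫⁻ y in closedBall w t, rieszPotential ν β F y ^ τ ∂ν
      ≤ (∫⁻ y in closedBall w t, rieszPotential ν β F y ∂ν) ^ τ *
          ν (closedBall w t) ^ (1 - τ) := by
        simpa only [Measure.restrict_apply_univ] using
          lintegral_rpow_le_of_le_one (μ := ν.restrict (closedBall w t)) hτ hτ1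
            (measurable_rieszPotential hF β).aemeasurable
    _ ≤ (C * ENNReal.ofReal (t ^ (d - β)) * ∫⁻ z, F z ∂ν) ^ τ *
          (ENNReal.ofReal (t ^ d) * μ (ball 0 1)) ^ (1 - τ) := by
        gcongr
        · exact h ν hν F hF w t ht
        · exact (hν _).trans_eq
            (by rw [Measure.addHaar_closedBall μ w ht.le, ← Real.rpow_natCast])
    _ = C ^ τ * μ (ball 0 1) ^ (1 - τ) * ENNReal.ofReal (t ^ (d - τ * β)) *
          (∫⁻ z, F z ∂ν) ^ τ := by
        simp only [← ENNReal.ofReal_rpow_of_pos ht]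
        rw [ENNReal.mul_rpow_of_nonneg _ _ hτ.le, ENNReal.mul_rpow_of_nonneg _ _ hτ.le,
          ENNReal.mul_rpow_of_nonneg _ _ (by linarith), ← ENNReal.rpow_mul, ← ENNReal.rpow_mul,
          show d - τ * β = (d - β) * τ + d * (1 - τ) by ring,
          ENNReal.rpow_add _ _ hT ENNReal.ofReal_ne_top]
        ring

theorem exists_setLIntegral_rieszPotential_rpow_le_of_one_le {β τ : ℝ} (hβ : 0 < β)
    (hτ1 : 1 ≤ τ) (hτβ : τ * β < finrank ℝ E) :
    ∃ C : ℝ≥0∞, C ≠ ∞ ∧ ∀ (ν : Measure E) [SFinite ν], ν ≤ μ → ∀ F : E → ℝ≥0∞, Measurable F →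
      ∀ (w : E) (t : ℝ), 0 < t → ∫⁻ y in closedBall w t, rieszPotential ν β F y ^ τ ∂ν ≤
        C * ENNReal.ofReal (t ^ ((finrank ℝ E : ℝ) - τ * β)) * (∫⁻ z, F z ∂ν) ^ τ := by
  have hτ : 0 < τ := one_pos.trans_le hτ1
  obtain ⟨C, hC, h⟩ := exists_setLIntegral_rieszPotential_le (μ := μ) (by positivity) hτβ
  refine ⟨C, hC, fun ν _ hν F hF w t ht => ?_⟩
  set Λ := ∫⁻ z, F z ∂ν
  have hpt : ∀ y, rieszPotential ν β F y ^ τ ≤ rieszPotential ν (τ * β) F y * Λ ^ (τ - 1) := by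
    intro y
    have hk : ∀ z, ENNReal.ofReal (dist y z ^ (-β)) ^ τ =
        ENNReal.ofReal (dist y z ^ (-(τ * β))) := fun z => by
      rw [ENNReal.ofReal_rpow_of_nonneg (by positivity) hτ.le, ← Real.rpow_mul dist_nonneg]
      ring_nf
    simpa only [rieszPotential, hk] using
      rpow_lintegral_mul_le_of_one_le (μ := ν) hτ1 hF
        (k := fun z => ENNReal.ofReal (dist y z ^ (-β))) (by fun_prop)
  have hΛ : Λ ^ (1 : ℝ) * Λ ^ (τ - 1) = Λ ^ τ := by
    rw [← ENNReal.rpow_add_of_nonneg _ _ zero_le_one (by linarith), add_sub_cancel]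
  calc ∫⁻ y in closedBall w t, rieszPotential ν β F y ^ τ ∂ν
      ≤ ∫⁻ y in closedBall w t, rieszPotential ν (τ * β) F y * Λ ^ (τ - 1) ∂ν :=
        lintegral_mono hpt
    _ = (∫⁻ y in closedBall w t, rieszPotential ν (τ * β) F y ∂ν) * Λ ^ (τ - 1) :=
        lintegral_mul_const _ (measurable_rieszPotential hF _)
    _ ≤ C * ENNReal.ofReal (t ^ ((finrank ℝ E : ℝ) - τ * β)) * Λ * Λ ^ (τ - 1) := by
        gcongr
        exact h ν hν F hF w t ht
    _ = C * ENNReal.ofReal (t ^ ((finrank ℝ E : ℝ) - τ * β)) * Λ ^ τ := by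
        rw [mul_assoc _ Λ, ← hΛ, ENNReal.rpow_one]

theorem exists_setLIntegral_rieszPotential_rpow_le {β τ : ℝ} (hβ : 0 < β)
    (hβd : β < finrank ℝ E) (hτ : 0 < τ) (hτβ : τ * β < finrank ℝ E) :
    ∃ C : ℝ≥0∞, C ≠ ∞ ∧ ∀ (ν : Measure E) [SFinite ν], ν ≤ μ → ∀ F : E → ℝ≥0∞, Measurable F →
      ∀ (w : E) (t : ℝ), 0 < t → ∫⁻ y in closedBall w t, rieszPotential ν β F y ^ τ ∂ν ≤
        C * ENNReal.ofReal (t ^ ((finrank ℝ E : ℝ) - τ * β)) * (∫⁻ z, F z ∂ν) ^ τ := by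
  rcases le_total τ 1 with hτ1 | hτ1
  · exact exists_setLIntegral_rieszPotential_rpow_le_of_le_one hβ hβd hτ hτ1
  · exact exists_setLIntegral_rieszPotential_rpow_le_of_one_le hβ hτ1 hτβ

theorem exists_rieszPotential_le {β : ℝ} (hβ : 0 < β) (hβd : β < finrank ℝ E) :
    ∃ C : ℝ≥0∞, C ≠ ∞ ∧ ∀ ν ≤ μ, ∀ (F : E → ℝ≥0∞) (Θ : ℝ≥0∞) (ρ : ℝ), 0 < ρ →
      (∀ᵐ z ∂ν, F z ≤ Θ) → ∫⁻ z, F z ∂ν ≤ Θ * ENNReal.ofReal (ρ ^ (finrank ℝ E : ℝ)) →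
      ∀ y, rieszPotential ν β F y ≤ C * Θ * ENNReal.ofReal (ρ ^ ((finrank ℝ E : ℝ) - β)) := by
  obtain ⟨C, hC, h⟩ := exists_setLIntegral_closedBall_rpow_neg_le (μ := μ) hβ hβd
  refine ⟨C + 1, ENNReal.add_ne_top.2 ⟨hC, ENNReal.one_ne_top⟩,
    fun ν hν F Θ ρ hρ hFΘ hΛ y => ?_⟩
  set k : E → ℝ≥0∞ := fun z => ENNReal.ofReal (dist y z ^ (-β))
  have hnear : ∫⁻ z in closedBall y ρ, F z * k z ∂ν ≤
      C * Θ * ENNReal.ofReal (ρ ^ ((finrank ℝ E : ℝ) - β)) :=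
    calc ∫⁻ z in closedBall y ρ, F z * k z ∂ν ≤ ∫⁻ z in closedBall y ρ, Θ * k z ∂ν :=
          lintegral_mono_ae ((ae_restrict_of_ae hFΘ).mono fun z hz => by gcongr)
      _ = Θ * ∫⁻ z in closedBall y ρ, k z ∂ν := lintegral_const_mul _ (by fun_prop)
      _ ≤ Θ * (C * ENNReal.ofReal (ρ ^ ((finrank ℝ E : ℝ) - β))) := by
          gcongr
          exact h ν hν y ρ hρ
      _ = _ := by ring
  have hfar : ∫⁻ z in (closedBall y ρ)ᶜ, F z * k z ∂ν ≤
      Θ * ENNReal.ofReal (ρ ^ ((finrank ℝ E : ℝ) - β)) :=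
    calc ∫⁻ z in (closedBall y ρ)ᶜ, F z * k z ∂ν
        ≤ ∫⁻ z in (closedBall y ρ)ᶜ, F z * ENNReal.ofReal (ρ ^ (-β)) ∂ν := by
          refine setLIntegral_mono' measurableSet_closedBall.compl fun z hz => ?_
          have hρz : ¬ dist z y ≤ ρ := hz
          rw [dist_comm] at hρz
          refine mul_le_mul_right (ENNReal.ofReal_le_ofReal ?_) _
          exact Real.rpow_le_rpow_of_nonpos hρ (not_le.1 hρz).le (by linarith)
      _ ≤ (∫⁻ z, F z ∂ν) * ENNReal.ofReal (ρ ^ (-β)) := by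
          rw [lintegral_mul_const' _ _ ENNReal.ofReal_ne_top]
          exact mul_le_mul_left (setLIntegral_le_lintegral _ _) _
      _ ≤ Θ * ENNReal.ofReal (ρ ^ (finrank ℝ E : ℝ)) * ENNReal.ofReal (ρ ^ (-β)) := by gcongr
      _ = Θ * ENNReal.ofReal (ρ ^ ((finrank ℝ E : ℝ) - β)) := by
          rw [mul_assoc, ← ENNReal.ofReal_mul (by positivity), ← Real.rpow_add hρ, sub_eq_add_neg]
  calc rieszPotential ν β F y
      = ∫⁻ z in closedBall y ρ, F z * k z ∂ν + ∫⁻ z in (closedBall y ρ)ᶜ, F z * k z ∂ν :=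
        (lintegral_add_compl _ measurableSet_closedBall).symm
    _ ≤ C * Θ * ENNReal.ofReal (ρ ^ ((finrank ℝ E : ℝ) - β)) +
          Θ * ENNReal.ofReal (ρ ^ ((finrank ℝ E : ℝ) - β)) := add_le_add hnear hfar
    _ = (C + 1) * Θ * ENNReal.ofReal (ρ ^ ((finrank ℝ E : ℝ) - β)) := by ring

theorem exists_setLIntegral_ball_rieszPotential_rpow_mul_le {a b σ : ℝ} (ha : 0 < a)
    (had : a < finrank ℝ E) (hb : 0 < b) (hbd : b < finrank ℝ E) (hσ : 0 ≤ σ) :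
    ∃ C : ℝ≥0∞, C ≠ ∞ ∧ ∀ ν ≤ μ, ∀ (F : E → ℝ≥0∞) (Θ : ℝ≥0∞) (ρ : ℝ), 0 < ρ →
      (∀ᵐ z ∂ν, F z ≤ Θ) → ∫⁻ z, F z ∂ν ≤ Θ * ENNReal.ofReal (ρ ^ (finrank ℝ E : ℝ)) →
      ∀ x : E, ∫⁻ y in ball x ρ, rieszPotential ν (finrank ℝ E - b) F y ^ σ *
          ENNReal.ofReal (dist x y ^ (-(finrank ℝ E - a))) ∂ν ≤
        C * Θ ^ σ * ENNReal.ofReal (ρ ^ (a + b * σ)) := by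
  set d : ℝ := (finrank ℝ E : ℝ)
  obtain ⟨Cp, hCp, hpt⟩ := exists_rieszPotential_le (μ := μ) (β := d - b) (by linarith)
    (by linarith)
  obtain ⟨Ck, hCk, hker⟩ := exists_setLIntegral_closedBall_rpow_neg_le (μ := μ) (γ := d - a)
    (by linarith) (by linarith)
  refine ⟨Ck * Cp ^ σ, ENNReal.mul_ne_top hCk (ENNReal.rpow_ne_top_of_nonneg hσ hCp),
    fun ν hν F Θ ρ hρ hFΘ hΛ x => ?_⟩
  set K := Cp * Θ * ENNReal.ofReal ρ ^ b
  have hG : ∀ y, rieszPotential ν (d - b) F y ≤ K := fun y =>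
    (hpt ν hν F Θ ρ hρ hFΘ hΛ y).trans_eq (by rw [sub_sub_cancel, ← ENNReal.ofReal_rpow_of_pos hρ])
  calc ∫⁻ y in ball x ρ, rieszPotential ν (d - b) F y ^ σ *
        ENNReal.ofReal (dist x y ^ (-(d - a))) ∂ν
      ≤ ∫⁻ y in ball x ρ, K ^ σ * ENNReal.ofReal (dist x y ^ (-(d - a))) ∂ν :=
        lintegral_mono fun y => by gcongr; exact hG y
    _ = K ^ σ * ∫⁻ y in ball x ρ, ENNReal.ofReal (dist x y ^ (-(d - a))) ∂ν :=
        lintegral_const_mul _ (by fun_prop)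
    _ ≤ K ^ σ * (Ck * ENNReal.ofReal ρ ^ a) := by
        gcongr
        refine (lintegral_mono_set ball_subset_closedBall).trans ((hker ν hν x ρ hρ).trans_eq ?_)
        rw [sub_sub_cancel, ← ENNReal.ofReal_rpow_of_pos hρ]
    _ = Ck * Cp ^ σ * Θ ^ σ * ENNReal.ofReal (ρ ^ (a + b * σ)) := by
        rw [ENNReal.mul_rpow_of_nonneg _ _ hσ, ENNReal.mul_rpow_of_nonneg _ _ hσ,
          ← ENNReal.rpow_mul, ← ENNReal.ofReal_rpow_of_pos hρ,
          ENNReal.rpow_add _ _ (by simpa using hρ) ENNReal.ofReal_ne_top]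
        ring

theorem exists_setLIntegral_compl_ball_rieszPotential_rpow_mul_le {a b σ : ℝ} (ha : 0 < a)
    (had : a < finrank ℝ E) (hb : 0 < b) (hbd : b < finrank ℝ E)
    (hσ : a < σ * (finrank ℝ E - b)) :
    ∃ C : ℝ≥0∞, C ≠ ∞ ∧ ∀ (ν : Measure E) [SFinite ν], ν ≤ μ → ∀ F : E → ℝ≥0∞, Measurable F →
      ∀ (Θ : ℝ≥0∞) (ρ : ℝ), 0 < ρ → (∀ᵐ z ∂ν, F z ≤ Θ) →
      ∫⁻ z, F z ∂ν ≤ Θ * ENNReal.ofReal (ρ ^ (finrank ℝ E : ℝ)) → ∀ x : E,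
      ∫⁻ y in (ball x ρ)ᶜ, rieszPotential ν (finrank ℝ E - b) F y ^ σ *
          ENNReal.ofReal (dist x y ^ (-(finrank ℝ E - a))) ∂ν ≤
        C * Θ ^ σ * ENNReal.ofReal (ρ ^ (a + b * σ)) := by
  set d : ℝ := (finrank ℝ E : ℝ)
  have hβ : 0 < d - b := by linarith
  obtain ⟨τ, hτ, hτσ, hτa, hτd⟩ := exists_le_and_mul_mem_Ioo ha had hβ hσ
  obtain ⟨Cp, hCp, hpt⟩ := exists_rieszPotential_le (μ := μ) hβ (by linarith)
  obtain ⟨CA, hCA, hmorrey⟩ :=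
    exists_setLIntegral_rieszPotential_rpow_le (μ := μ) hβ (by linarith) hτ hτd
  obtain ⟨Cf, hCf, hfar⟩ := exists_setLIntegral_compl_ball_rpow_mul_rpow_neg_le (X := E)
    (e := d - τ * (d - b)) (α := d - a) (by linarith) (by linarith) hτ.le hτσ
  have hστ : 0 ≤ σ - τ := sub_nonneg.2 hτσ
  refine ⟨Cf * Cp ^ (σ - τ) * CA, ENNReal.mul_ne_top (ENNReal.mul_ne_top hCf
      (ENNReal.rpow_ne_top_of_nonneg hστ hCp)) hCA,
    fun ν _ hν F hF Θ ρ hρ hFΘ hΛ x => ?_⟩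
  set r := ENNReal.ofReal ρ
  have hρr : ∀ u : ℝ, ENNReal.ofReal (ρ ^ u) = r ^ u := fun u =>
    (ENNReal.ofReal_rpow_of_pos hρ).symm
  have hrpow : ∀ u v : ℝ, r ^ u * r ^ v = r ^ (u + v) := fun u v =>
    (ENNReal.rpow_add _ _ (by simpa [r] using hρ) ENNReal.ofReal_ne_top).symm
  have hG : ∀ y, rieszPotential ν (d - b) F y ≤ Cp * Θ * r ^ b := fun y =>
    (hpt ν hν F Θ ρ hρ hFΘ hΛ y).trans_eq (by rw [sub_sub_cancel, hρr])
  have hGτ : ∀ t > 0, ∫⁻ y in closedBall x t, rieszPotential ν (d - b) F y ^ τ ∂ν ≤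
      ENNReal.ofReal (t ^ (d - τ * (d - b))) * (CA * (Θ * r ^ d) ^ τ) :=
    fun t ht => (hmorrey ν hν F hF x t ht).trans
      (by rw [mul_comm CA, mul_assoc, ← hρr]; gcongr)
  calc _ ≤ Cf * (Cp * Θ * r ^ b) ^ (σ - τ) * ENNReal.ofReal (ρ ^ (d - τ * (d - b) - (d - a))) *
        (CA * (Θ * r ^ d) ^ τ) := hfar ν _ _ _ x (measurable_rieszPotential hF _) hG hGτ ρ hρ
    _ = Cf * Cp ^ (σ - τ) * CA * (Θ ^ (σ - τ) * Θ ^ τ) *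
        (r ^ (b * (σ - τ)) * r ^ (d - τ * (d - b) - (d - a)) * r ^ (d * τ)) := by
      rw [ENNReal.mul_rpow_of_nonneg _ _ hστ, ENNReal.mul_rpow_of_nonneg _ _ hστ,
        ENNReal.mul_rpow_of_nonneg _ _ hτ.le, ← ENNReal.rpow_mul, ← ENNReal.rpow_mul, hρr]
      ring
    _ = Cf * Cp ^ (σ - τ) * CA * Θ ^ σ * ENNReal.ofReal (ρ ^ (a + b * σ)) := by
      rw [← ENNReal.rpow_add_of_nonneg _ _ hστ hτ.le, sub_add_cancel, hrpow, hrpow, hρr,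
        show b * (σ - τ) + (d - τ * (d - b) - (d - a)) + d * τ = a + b * σ by ring]

theorem exists_lintegral_rieszPotential_rpow_mul_le_of_le {a b σ : ℝ} (ha : 0 < a)
    (had : a < finrank ℝ E) (hb : 0 < b) (hbd : b < finrank ℝ E)
    (hσ : a < σ * (finrank ℝ E - b)) :
    ∃ C : ℝ≥0∞, C ≠ ∞ ∧ ∀ (ν : Measure E) [SFinite ν], ν ≤ μ → ∀ F : E → ℝ≥0∞, Measurable F →
      ∀ (Θ : ℝ≥0∞) (ρ : ℝ), 0 < ρ → (∀ᵐ z ∂ν, F z ≤ Θ) →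
      ∫⁻ z, F z ∂ν ≤ Θ * ENNReal.ofReal (ρ ^ (finrank ℝ E : ℝ)) → ∀ x : E,
      ∫⁻ y, rieszPotential ν (finrank ℝ E - b) F y ^ σ *
          ENNReal.ofReal (dist x y ^ (-(finrank ℝ E - a))) ∂ν ≤
        C * Θ ^ σ * ENNReal.ofReal (ρ ^ (a + b * σ)) := by
  have hσ0 : 0 ≤ σ := (pos_of_mul_pos_left (ha.trans hσ) (by linarith)).le
  obtain ⟨Cn, hCn, hnear⟩ :=
    exists_setLIntegral_ball_rieszPotential_rpow_mul_le (μ := μ) ha had hb hbd hσ0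
  obtain ⟨Cf, hCf, hfar⟩ :=
    exists_setLIntegral_compl_ball_rieszPotential_rpow_mul_le (μ := μ) ha had hb hbd hσ
  refine ⟨Cn + Cf, ENNReal.add_ne_top.2 ⟨hCn, hCf⟩, fun ν _ hν F hF Θ ρ hρ hFΘ hΛ x => ?_⟩
  rw [← lintegral_add_compl _ measurableSet_ball]
  exact (add_le_add (hnear ν hν F Θ ρ hρ hFΘ hΛ x) (hfar ν hν F hF Θ ρ hρ hFΘ hΛ x)).trans_eq
    (by ring)

theorem exists_lintegral_rieszPotential_rpow_mul_le {a b σ : ℝ} (ha : 0 < a)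
    (had : a < finrank ℝ E) (hb : 0 < b) (hbd : b < finrank ℝ E)
    (hσ : a < σ * (finrank ℝ E - b)) :
    ∃ C : ℝ≥0∞, C ≠ ∞ ∧ ∀ (ν : Measure E) [SFinite ν], ν ≤ μ → ∀ F : E → ℝ≥0∞,
      AEMeasurable F ν → ∀ x : E,
      ∫⁻ y, rieszPotential ν (finrank ℝ E - b) F y ^ σ *
          ENNReal.ofReal (dist x y ^ (-(finrank ℝ E - a))) ∂ν ≤
        C * (∫⁻ z, F z ∂ν) ^ ((a + b * σ) / finrank ℝ E) *
          essSup F ν ^ ((σ * (finrank ℝ E - b) - a) / finrank ℝ E) := by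
  set d : ℝ := (finrank ℝ E : ℝ)
  have hd : 0 < d := ha.trans had
  have hσ0 : 0 < σ := pos_of_mul_pos_left (ha.trans hσ) (by linarith)
  have hp : 0 < (a + b * σ) / d := by positivity
  have hq : 0 < (σ * (d - b) - a) / d := div_pos (by linarith) hd
  obtain ⟨C, hC, h⟩ := exists_lintegral_rieszPotential_rpow_mul_le_of_le (μ := μ) ha had hb hbd hσ
  refine ⟨C + 1, ENNReal.add_ne_top.2 ⟨hC, ENNReal.one_ne_top⟩,
    fun ν _ hν F hF x => ?_⟩
  obtain ⟨F', hF', hFF'⟩ := hF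
  rw [rieszPotential_congr_ae hFF', lintegral_congr_ae hFF', essSup_congr_ae hFF']
  set Λ := ∫⁻ z, F' z ∂ν
  set Θ := essSup F' ν
  have hFΘ : ∀ᵐ z ∂ν, F' z ≤ Θ := ae_le_essSup
  by_cases hΛ0 : Λ = 0
  · have hF0 : ∀ y, rieszPotential ν (d - b) F' y = 0 := fun y =>
      lintegral_eq_zero_iff (by fun_prop) |>.2 <|
        ((lintegral_eq_zero_iff hF').1 hΛ0).mono fun z hz => by simp [hz]
    simp [hF0, ENNReal.zero_rpow_of_pos hσ0]
  have hΘ0 : Θ ≠ 0 := fun hΘ => hΛ0 <| (lintegral_eq_zero_iff hF').2 <|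
    hFΘ.mono fun z hz => nonpos_iff_eq_zero.1 (hz.trans_eq hΘ)
  by_cases hfin : Λ = ∞ ∨ Θ = ∞
  · refine le_top.trans_eq (Eq.symm ?_)
    rcases hfin with hΛt | hΘt
    · simp [hΛt, ENNReal.top_rpow_of_pos hp, hΘ0, hq.le]
    · simp [hΘt, ENNReal.top_rpow_of_pos hq, hΛ0, hp.le]
  obtain ⟨hΛt, hΘt⟩ : Λ ≠ ∞ ∧ Θ ≠ ∞ := not_or.1 hfin
  -- the radius at which the bounds `Θ ρ ^ d` and `Λ` for the mass of `F` in a ball balance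
  obtain ⟨ρ, hρ, hρpow⟩ := exists_pos_ofReal_rpow_eq (d := d)
    (by simp [ENNReal.div_eq_zero_iff, hΛ0, hΘt]) (ENNReal.div_ne_top hΛt hΘ0)
  calc ∫⁻ y, rieszPotential ν (d - b) F' y ^ σ * ENNReal.ofReal (dist x y ^ (-(d - a))) ∂ν
      ≤ C * Θ ^ σ * ENNReal.ofReal (ρ ^ (a + b * σ)) :=
        h ν hν F' hF' Θ ρ hρ hFΘ (by
          rw [hρpow, div_self hd.ne', ENNReal.rpow_one, ENNReal.mul_div_cancel hΘ0 hΘt]) x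
    _ = C * Λ ^ ((a + b * σ) / d) * Θ ^ ((σ * (d - b) - a) / d) := by
        rw [hρpow, mul_assoc, rpow_mul_div_rpow_eq_rpow_mul_rpow_sub hΘ0 hΘt hp.le,
          show σ - (a + b * σ) / d = (σ * (d - b) - a) / d by field_simp; ring, mul_assoc]
    _ ≤ (C + 1) * Λ ^ ((a + b * σ) / d) * Θ ^ ((σ * (d - b) - a) / d) := by
        gcongr
        exact le_self_add

end Euclidean

theorem ofReal_integral_div_rpow_le_rieszPotential {E : Type*} [NormedAddCommGroup E]
    [MeasurableSpace E] {ν : Measure E} {f : E → ℝ} (hf : ∀ z, 0 ≤ f z) (β : ℝ) (y : E) :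
    ENNReal.ofReal (∫ z, f z / ‖y - z‖ ^ β ∂ν) ≤
      rieszPotential ν β (fun z => ENNReal.ofReal (f z)) y := by
  have hfk : ∀ z, f z / ‖y - z‖ ^ β = f z * dist y z ^ (-β) := fun z => by
    rw [dist_eq_norm, Real.rpow_neg (norm_nonneg _), div_eq_mul_inv]
  simp only [hfk]
  rw [← Real.enorm_eq_ofReal (integral_nonneg fun z => mul_nonneg (hf z) (by positivity))]
  refine (enorm_integral_le_lintegral_enorm _).trans_eq (lintegral_congr fun z => ?_)
  rw [Real.enorm_eq_ofReal (mul_nonneg (hf z) (by positivity)), ENNReal.ofReal_mul (hf z)]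

theorem integral_rpow_div_rpow_le_toReal {E : Type*} [NormedAddCommGroup E] [MeasurableSpace E]
    {ν : Measure E} {f : E → ℝ} (hf : ∀ z, 0 ≤ f z) {α β σ : ℝ} (hσ : 0 ≤ σ) (x : E)
    {M : ℝ≥0∞} (hM : M ≠ ∞)
    (h : ∫⁻ y, rieszPotential ν β (fun z => ENNReal.ofReal (f z)) y ^ σ *
      ENNReal.ofReal (dist x y ^ (-α)) ∂ν ≤ M) :
    ∫ y, (∫ z, f z / ‖y - z‖ ^ β ∂ν) ^ σ / ‖x - y‖ ^ α ∂ν ≤ M.toReal := by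
  have hI : ∀ y, 0 ≤ ∫ z, f z / ‖y - z‖ ^ β ∂ν := fun y =>
    integral_nonneg fun z => div_nonneg (hf z) (by positivity)
  have hpt : ∀ y, ENNReal.ofReal ((∫ z, f z / ‖y - z‖ ^ β ∂ν) ^ σ / ‖x - y‖ ^ α) ≤
      rieszPotential ν β (fun z => ENNReal.ofReal (f z)) y ^ σ *
        ENNReal.ofReal (dist x y ^ (-α)) := fun y => by
    rw [div_eq_mul_inv, ← Real.rpow_neg (norm_nonneg _), ← dist_eq_norm,
      ENNReal.ofReal_mul (Real.rpow_nonneg (hI y) σ), ← ENNReal.ofReal_rpow_of_nonneg (hI y) hσ]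
    gcongr
    exact ofReal_integral_div_rpow_le_rieszPotential hf β y
  calc ∫ y, (∫ z, f z / ‖y - z‖ ^ β ∂ν) ^ σ / ‖x - y‖ ^ α ∂ν
      ≤ (∫⁻ y, ENNReal.ofReal ((∫ z, f z / ‖y - z‖ ^ β ∂ν) ^ σ / ‖x - y‖ ^ α) ∂ν).toReal := by
        refine (Real.le_norm_self _).trans ((norm_integral_le_lintegral_norm _).trans_eq ?_)
        simp_rw [Real.norm_of_nonneg (div_nonneg (Real.rpow_nonneg (hI _) σ)
          (Real.rpow_nonneg (norm_nonneg _) _))]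
    _ ≤ M.toReal := ENNReal.toReal_mono hM ((lintegral_mono hpt).trans h)

theorem havin_mazya_potential_estimate_general (n : ℕ) (a b σ : ℝ)
    (ha : a ∈ Set.Ioo (0:ℝ) n) (hb : b ∈ Set.Ioo (0:ℝ) n) (hσ : σ > a / (n - b))
    (c : EuclideanSpace ℝ (Fin n)) (R : ℝ) :
    ∃ C > (0:ℝ), ∀ f : EuclideanSpace ℝ (Fin n) → ℝ,
      (∀ y, 0 ≤ f y) →
      MemLp f ⊤ (volume.restrict (ball c R)) →
      ∀ x ∈ ball c R,
        ∫ y in ball c R,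
            (∫ z in ball c R, f z / ‖y - z‖ ^ ((n : ℝ) - b)) ^ σ / ‖x - y‖ ^ ((n : ℝ) - a) ≤
          C * ((eLpNorm f 1 (volume.restrict (ball c R))).toReal) ^ ((a + b * σ) / n)
            * ((eLpNorm f ⊤ (volume.restrict (ball c R))).toReal) ^ ((σ * (n - b) - a) / n) := by
  obtain ⟨ha0, han⟩ := ha
  obtain ⟨hb0, hbn⟩ := hb
  have hσ' : a < σ * (n - b) := by rwa [gt_iff_lt, div_lt_iff₀ (by linarith)] at hσ
  have hσ0 : 0 < σ := (div_pos ha0 (by linarith)).trans hσ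
  obtain ⟨C, hC, h⟩ := exists_lintegral_rieszPotential_rpow_mul_le
    (μ := (volume : Measure (EuclideanSpace ℝ (Fin n)))) ha0
    (by rwa [finrank_euclideanSpace_fin]) hb0 (by rwa [finrank_euclideanSpace_fin])
    (by rwa [finrank_euclideanSpace_fin])
  simp only [finrank_euclideanSpace_fin] at h
  refine ⟨C.toReal + 1, by positivity, fun f hf hfM x _ => ?_⟩
  set ν := volume.restrict (ball c R)
  have : IsFiniteMeasure ν := isFiniteMeasure_restrict.2 measure_ball_lt_top.ne
  have hΛ : ∫⁻ z, ENNReal.ofReal (f z) ∂ν = eLpNorm f 1 ν := by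
    simp [eLpNorm_one_eq_lintegral_enorm, Real.enorm_eq_ofReal (hf _)]
  have hΘ : essSup (fun z => ENNReal.ofReal (f z)) ν = eLpNorm f ⊤ ν := by
    simp [eLpNorm_exponent_top, eLpNormEssSup, Real.enorm_eq_ofReal (hf _)]
  have hbound := h ν Measure.restrict_le_self _ hfM.1.aemeasurable.ennreal_ofReal x
  rw [hΛ, hΘ] at hbound
  set M := C * eLpNorm f 1 ν ^ ((a + b * σ) / n) * eLpNorm f ⊤ ν ^ ((σ * (n - b) - a) / n)
  have hM : M ≠ ∞ :=
    ENNReal.mul_ne_top (ENNReal.mul_ne_top hC (ENNReal.rpow_ne_top_of_nonneg (by positivity)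
      (hfM.mono_exponent le_top).2.ne))
      (ENNReal.rpow_ne_top_of_nonneg (div_nonneg (by linarith) n.cast_nonneg) hfM.2.ne)
  calc _ ≤ M.toReal := integral_rpow_div_rpow_le_toReal hf hσ0.le x hM hbound
    _ ≤ _ := by
        simp only [M, ENNReal.toReal_mul, ENNReal.toReal_rpow]
        gcongr
        linarith

/-- Pointwise estimate for the Havin–Maz'ya type nonlinear potential
`U_{a,b,σ} f = I_a ((I_b f)^σ)` on a ball. -/
theorem havin_mazya_potential_estimate (n : ℕ) (hn : 3 ≤ n) (a b σ : ℝ)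
    (ha : a ∈ Set.Ioo (0:ℝ) n) (hb : b ∈ Set.Ioo (0:ℝ) n) (hσ : σ > a / (n - b))
    (c : EuclideanSpace ℝ (Fin n)) (R : ℝ) (hR : 0 < R) :
    ∃ C > (0:ℝ), ∀ f : EuclideanSpace ℝ (Fin n) → ℝ,
      (∀ y, 0 ≤ f y) →
      MemLp f ⊤ (volume.restrict (ball c R)) →
      ∀ x ∈ ball c R,
        ∫ y in ball c R,
            (∫ z in ball c R, f z / ‖y - z‖ ^ ((n : ℝ) - b)) ^ σ / ‖x - y‖ ^ ((n : ℝ) - a) ≤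
          C * ((eLpNorm f 1 (volume.restrict (ball c R))).toReal) ^ ((a + b * σ) / n)
            * ((eLpNorm f ⊤ (volume.restrict (ball c R))).toReal) ^ ((σ * (n - b) - a) / n) :=
  havin_mazya_potential_estimate_general n a b σ ha hb hσ c R
end
end

section
/- Let $n \ge 3$, $\alpha \in (0,n)$, $\gamma \ge 0$, and let $v \in L^1(B_1(0))$ be nonnegative with $v(x) = \mathcal{O}(|x|^{-\gamma})$ as $x \to 0$. Then $\int_{|y|<1} \frac{v(y)\,dy}{|x-y|^{\alpha}} = \mathcal{O}(|x|^{-\alpha}) + o\big(|x|^{-\gamma\alpha/n}\big)$ as $x \to 0$, i.e.\ there exist $C > 0$ and a function $\varepsilon(x) \to 0$ as $x \to 0$ such that $\int_{|y|<1} \frac{v(y)\,dy}{|x-y|^{\alpha}} \le C|x|^{-\alpha} + \varepsilon(x)|x|^{-\gamma\alpha/n}$ near $0$. -/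
/-!
Write `r = ‖x‖`, `d = dim E`, and split the unit ball into the ball `B(x, t)` with `t ≤ r / 2`,
the rest of `B(0, 2r)`, and the points at distance at least `r` from `x`. On `B(x, t)` we have
`v ≲ r^{-γ}`, and `∫_{B(x,t)} |x - y|^{-α} dy = t^{d-α} ∫_{B(0,1)} |z|^{-α} dz` by scaling. On the
middle piece `|x - y|^{-α} ≤ t^{-α}` while `v` has mass `m(x) = ∫_{B(0,2r)} v → 0`, and on the far
piece `|x - y|^{-α} ≤ r^{-α}`. The radius `t = min (r / 2) (((m + r) r^γ)^{1/d})` makes both of the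
first two contributions `O((m + r)^{1-α/d} r^{-γα/d}) = o(r^{-γα/d})`; the cap `r / 2` costs only
`O(r^{-α})`.
-/

open MeasureTheory Metric Filter Topology Module

theorem rpow_balance {d α γ M r : ℝ} (hd : 0 < d) (hM : 0 < M) (hr : 0 < r) :
    r ^ (-γ) * (M ^ (1 / d) * r ^ (γ / d)) ^ (d - α) = M ^ ((d - α) / d) * r ^ (-(γ * α / d)) ∧
      (M ^ (1 / d) * r ^ (γ / d)) ^ (-α) * M = M ^ ((d - α) / d) * r ^ (-(γ * α / d)) := by
  rw [Real.mul_rpow (by positivity) (by positivity), ← Real.rpow_mul hM.le, ← Real.rpow_mul hr.le,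
    Real.mul_rpow (by positivity) (by positivity), ← Real.rpow_mul hM.le, ← Real.rpow_mul hr.le,
    mul_left_comm, ← Real.rpow_add hr, mul_right_comm, ← Real.rpow_add_one hM.ne']
  constructor <;> congr 2 <;> field_simp <;> ring

theorem exists_radius_balancing {d α γ r m V K B₀ : ℝ} (hα0 : 0 ≤ α) (hαd : α < d)
    (hr : 0 < r) (hm0 : 0 ≤ m) (hmV : m ≤ V) (hK0 : 0 ≤ K) (hB₀ : 0 ≤ B₀) :
    ∃ t, 0 < t ∧ t ≤ r / 2 ∧
      B₀ * r ^ (-γ) * (t ^ (d - α) * K) + t ^ (-α) * m + r ^ (-α) * V ≤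
        (2 ^ α + 1) * V * r ^ (-α) +
          (B₀ * K + 1) * (m + r) ^ ((d - α) / d) * r ^ (-(γ * α / d)) := by
  set M := m + r
  set T := M ^ (1 / d) * r ^ (γ / d)
  have hM0 : 0 < M := by positivity
  have hT0 : 0 < T := by positivity
  have ht0 : 0 < min (r / 2) T := lt_min (by positivity) hT0
  refine ⟨min (r / 2) T, ht0, min_le_left _ _, ?_⟩
  obtain ⟨hnear, hsmall⟩ := rpow_balance (d := d) (α := α) (γ := γ) (by linarith) hM0 hr
  have hnear_le : B₀ * r ^ (-γ) * (min (r / 2) T ^ (d - α) * K) ≤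
      B₀ * K * (M ^ ((d - α) / d) * r ^ (-(γ * α / d))) := by
    calc B₀ * r ^ (-γ) * (min (r / 2) T ^ (d - α) * K)
          ≤ B₀ * r ^ (-γ) * (T ^ (d - α) * K) := by
          gcongr
          exact min_le_right _ _
      _ = _ := by rw [← hnear]; ring
  have hpow_le : min (r / 2) T ^ (-α) ≤ 2 ^ α * r ^ (-α) + T ^ (-α) := by
    have hhalf : (r / 2) ^ (-α) = 2 ^ α * r ^ (-α) := by
      rw [Real.div_rpow hr.le zero_le_two, Real.rpow_neg zero_le_two]
      field_simp
    rcases min_choice (r / 2) T with h | h <;> rw [h]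
    · linarith [Real.rpow_nonneg hT0.le (-α)]
    · linarith [show 0 ≤ 2 ^ α * r ^ (-α) by positivity]
  have hmiddle_le : min (r / 2) T ^ (-α) * m ≤
      2 ^ α * r ^ (-α) * V + M ^ ((d - α) / d) * r ^ (-(γ * α / d)) := by
    calc min (r / 2) T ^ (-α) * m ≤ (2 ^ α * r ^ (-α) + T ^ (-α)) * m := by gcongr
      _ ≤ 2 ^ α * r ^ (-α) * V + T ^ (-α) * M := by
          rw [add_mul]; gcongr; linarith
      _ = _ := by rw [hsmall]
  linarith

theorem div_rpow_le_rpow_neg_mul {a s t α : ℝ} (ha : 0 ≤ a) (ht : 0 < t) (hts : t ≤ s)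
    (hα : 0 ≤ α) : a / s ^ α ≤ t ^ (-α) * a := by
  rw [div_eq_mul_inv, ← Real.rpow_neg (ht.le.trans hts), mul_comm]
  exact mul_le_mul_of_nonneg_right (Real.rpow_le_rpow_of_nonpos ht hts (neg_nonpos.2 hα)) ha

section NormedGroup

variable {E : Type*} [SeminormedAddCommGroup E]

theorem ball_subset_union_ball_diff (x : E) (t : ℝ) :
    ball (0 : E) 1 ⊆ ball x t ∪ (ball 0 (2 * ‖x‖) \ ball x t) ∪ (ball 0 1 \ ball x ‖x‖) := by
  intro y hy
  by_cases hnear : y ∈ ball x t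
  · exact Or.inl (Or.inl hnear)
  by_cases hsmall : y ∈ ball (0 : E) (2 * ‖x‖)
  · exact Or.inl (Or.inr ⟨hsmall, hnear⟩)
  refine Or.inr ⟨hy, fun hfar => hsmall ?_⟩
  rw [mem_ball, dist_eq_norm] at hfar
  rw [mem_ball_zero_iff]
  linarith [norm_sub_norm_le y x]

theorem le_mul_rpow_neg_of_mem_ball {v : E → ℝ} {γ C₀ ρ : ℝ} (hγ : 0 ≤ γ) (hC₀ : 0 ≤ C₀)
    (hv : ∀ y : E, 0 < ‖y‖ → ‖y‖ < ρ → v y ≤ C₀ * ‖y‖ ^ (-γ)) {x : E} (hx0 : 0 < ‖x‖)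
    (hxρ : 2 * ‖x‖ < ρ) {t : ℝ} (ht : t ≤ ‖x‖ / 2) :
    ∀ y ∈ ball x t, v y ≤ C₀ * 2 ^ γ * ‖x‖ ^ (-γ) := by
  intro y hy
  rw [mem_ball, dist_eq_norm] at hy
  have hy_lower : ‖x‖ / 2 ≤ ‖y‖ := by linarith [norm_sub_norm_le x y, norm_sub_rev x y]
  calc v y ≤ C₀ * ‖y‖ ^ (-γ) := hv y (by linarith) (by linarith [norm_sub_norm_le y x])
    _ ≤ C₀ * (‖x‖ / 2) ^ (-γ) := mul_le_mul_of_nonneg_left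
        (Real.rpow_le_rpow_of_nonpos (by positivity) hy_lower (neg_nonpos.2 hγ)) hC₀
    _ = C₀ * 2 ^ γ * ‖x‖ ^ (-γ) := by
        rw [Real.div_rpow (norm_nonneg x) zero_le_two, Real.rpow_neg zero_le_two]
        field_simp

variable [MeasurableSpace E] [OpensMeasurableSpace E] {μ : Measure E}

theorem setLIntegral_diff_ball_div_norm_sub_rpow_le {v : E → ℝ} (hv0 : ∀ y, 0 ≤ v y)
    {s : Set E} (hs : MeasurableSet s) (hvs : IntegrableOn v s μ) {α t : ℝ} (hα : 0 ≤ α)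
    (ht : 0 < t) (x : E) :
    ∫⁻ y in s \ ball x t, ENNReal.ofReal (v y / ‖x - y‖ ^ α) ∂μ ≤
      ENNReal.ofReal (t ^ (-α) * ∫ y in s, v y ∂μ) := by
  calc ∫⁻ y in s \ ball x t, ENNReal.ofReal (v y / ‖x - y‖ ^ α) ∂μ
      ≤ ∫⁻ y in s \ ball x t, ENNReal.ofReal (t ^ (-α)) * ENNReal.ofReal (v y) ∂μ := by
        refine setLIntegral_mono' (hs.diff measurableSet_ball) fun y hy => ?_
        rw [← ENNReal.ofReal_mul (by positivity)]
        refine ENNReal.ofReal_le_ofReal (div_rpow_le_rpow_neg_mul (hv0 y) ht ?_ hα)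
        simpa [dist_eq_norm'] using hy.2
    _ ≤ ∫⁻ y in s, ENNReal.ofReal (t ^ (-α)) * ENNReal.ofReal (v y) ∂μ :=
        lintegral_mono_set Set.sdiff_subset
    _ = ENNReal.ofReal (t ^ (-α) * ∫ y in s, v y ∂μ) := by
        rw [lintegral_const_mul' _ _ ENNReal.ofReal_ne_top,
          ← ofReal_integral_eq_lintegral_ofReal hvs (ae_of_all _ hv0),
          ← ENNReal.ofReal_mul (by positivity)]

end NormedGroup

section AddHaar

variable {E : Type*} [NormedAddCommGroup E] [NormedSpace ℝ E] [FiniteDimensional ℝ E]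
  [MeasurableSpace E] [BorelSpace E] (μ : Measure E) [μ.IsAddHaarMeasure]

theorem setIntegral_ball_zero_norm_rpow_neg (α : ℝ) {t : ℝ} (ht : 0 < t) :
    ∫ z in ball (0 : E) t, ‖z‖ ^ (-α) ∂μ =
      t ^ ((finrank ℝ E : ℝ) - α) * ∫ z in ball (0 : E) 1, ‖z‖ ^ (-α) ∂μ := by
  have h := Measure.setIntegral_comp_smul_of_pos μ (fun z : E => ‖z‖ ^ (-α)) (ball 0 1) ht
  have hscale : ∀ z : E, ‖t • z‖ ^ (-α) = t ^ (-α) * ‖z‖ ^ (-α) := fun z => by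
    rw [norm_smul, Real.norm_of_nonneg ht.le, Real.mul_rpow ht.le (norm_nonneg z)]
  simp only [hscale, integral_const_mul, smul_eq_mul, smul_unitBall_of_pos ht] at h
  rw [Real.rpow_sub ht, Real.rpow_natCast, Real.rpow_neg ht.le] at *
  field_simp at h ⊢
  linarith

theorem setLIntegral_ball_norm_sub_rpow_neg [Nontrivial E] {α : ℝ}
    (hα : α < finrank ℝ E) (x : E) {t : ℝ} (ht : 0 < t) :
    ∫⁻ y in ball x t, ENNReal.ofReal (‖x - y‖ ^ (-α)) ∂μ =
      ENNReal.ofReal (t ^ ((finrank ℝ E : ℝ) - α) * ∫ z in ball (0 : E) 1, ‖z‖ ^ (-α) ∂μ) := by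
  have hpre : (fun y => x - y) ⁻¹' ball (0 : E) t = ball x t := by
    ext y
    simp [dist_eq_norm, norm_sub_rev]
  have hint : IntegrableOn (fun z : E => ‖z‖ ^ (-α)) (ball 0 t) μ :=
    integrableOn_ball_of_norm_le_rpow finrank_pos (C := 1) hα
      (ae_of_all _ fun z => by simp [abs_of_nonneg (Real.rpow_nonneg (norm_nonneg z) _)])
      (measurable_norm.pow_const _).aestronglyMeasurable
  rw [← hpre, (Measure.measurePreserving_sub_left μ x).setLIntegral_comp_preimage
    measurableSet_ball (f := fun z => ENNReal.ofReal (‖z‖ ^ (-α))) (by fun_prop),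
    ← ofReal_integral_eq_lintegral_ofReal hint (ae_of_all _ fun z => by positivity),
    setIntegral_ball_zero_norm_rpow_neg μ α ht]

theorem setLIntegral_ball_div_norm_sub_rpow_le [Nontrivial E] {v : E → ℝ}
    (hv0 : ∀ y, 0 ≤ v y) {α B t : ℝ} (hα : α < finrank ℝ E) (x : E) (ht : 0 < t)
    (hB : ∀ y ∈ ball x t, v y ≤ B) :
    ∫⁻ y in ball x t, ENNReal.ofReal (v y / ‖x - y‖ ^ α) ∂μ ≤
      ENNReal.ofReal
        (B * (t ^ ((finrank ℝ E : ℝ) - α) * ∫ z in ball (0 : E) 1, ‖z‖ ^ (-α) ∂μ)) := by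
  have hB0 : 0 ≤ B := (hv0 x).trans (hB x (mem_ball_self ht))
  calc ∫⁻ y in ball x t, ENNReal.ofReal (v y / ‖x - y‖ ^ α) ∂μ
      ≤ ∫⁻ y in ball x t, ENNReal.ofReal B * ENNReal.ofReal (‖x - y‖ ^ (-α)) ∂μ := by
        refine setLIntegral_mono' measurableSet_ball fun y hy => ?_
        rw [← ENNReal.ofReal_mul hB0, div_eq_mul_inv, ← Real.rpow_neg (norm_nonneg _)]
        exact ENNReal.ofReal_le_ofReal (mul_le_mul_of_nonneg_right (hB y hy) (by positivity))
    _ = _ := by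
        rw [lintegral_const_mul' _ _ ENNReal.ofReal_ne_top,
          setLIntegral_ball_norm_sub_rpow_neg μ hα x ht, ← ENNReal.ofReal_mul hB0]

theorem setLIntegral_unitBall_div_norm_sub_rpow_le [Nontrivial E] {v : E → ℝ}
    (hv0 : ∀ y, 0 ≤ v y) (hv1 : IntegrableOn v (ball 0 1) μ) {α B t : ℝ} (hα0 : 0 ≤ α)
    (hαd : α < finrank ℝ E) {x : E} (hx0 : 0 < ‖x‖) (hx1 : 2 * ‖x‖ ≤ 1) (ht : 0 < t)
    (hB : ∀ y ∈ ball x t, v y ≤ B) :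
    ∫⁻ y in ball 0 1, ENNReal.ofReal (v y / ‖x - y‖ ^ α) ∂μ ≤
      ENNReal.ofReal
        (B * (t ^ ((finrank ℝ E : ℝ) - α) * ∫ z in ball (0 : E) 1, ‖z‖ ^ (-α) ∂μ) +
          t ^ (-α) * ∫ y in ball 0 (2 * ‖x‖), v y ∂μ +
            ‖x‖ ^ (-α) * ∫ y in ball 0 1, v y ∂μ) := by
  have hB0 : 0 ≤ B := (hv0 x).trans (hB x (mem_ball_self ht))
  have hK0 : 0 ≤ ∫ z in ball (0 : E) 1, ‖z‖ ^ (-α) ∂μ :=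
    setIntegral_nonneg measurableSet_ball fun z _ => by positivity
  have hm0 : 0 ≤ ∫ y in ball 0 (2 * ‖x‖), v y ∂μ :=
    setIntegral_nonneg measurableSet_ball fun y _ => hv0 y
  have hV0 : 0 ≤ ∫ y in ball 0 1, v y ∂μ :=
    setIntegral_nonneg measurableSet_ball fun y _ => hv0 y
  calc ∫⁻ y in ball 0 1, ENNReal.ofReal (v y / ‖x - y‖ ^ α) ∂μ
      ≤ ∫⁻ y in ball x t ∪ (ball 0 (2 * ‖x‖) \ ball x t) ∪ (ball 0 1 \ ball x ‖x‖),
          ENNReal.ofReal (v y / ‖x - y‖ ^ α) ∂μ :=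
        lintegral_mono_set (ball_subset_union_ball_diff x t)
    _ ≤ (∫⁻ y in ball x t, ENNReal.ofReal (v y / ‖x - y‖ ^ α) ∂μ) +
          (∫⁻ y in ball 0 (2 * ‖x‖) \ ball x t, ENNReal.ofReal (v y / ‖x - y‖ ^ α) ∂μ) +
          ∫⁻ y in ball 0 1 \ ball x ‖x‖, ENNReal.ofReal (v y / ‖x - y‖ ^ α) ∂μ :=
        (lintegral_union_le _ _ _).trans (add_le_add_left (lintegral_union_le _ _ _) _)
    _ ≤ _ := by
        rw [ENNReal.ofReal_add (by positivity) (by positivity),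
          ENNReal.ofReal_add (by positivity) (by positivity)]
        gcongr
        · exact setLIntegral_ball_div_norm_sub_rpow_le μ hv0 hαd x ht hB
        · exact setLIntegral_diff_ball_div_norm_sub_rpow_le hv0 measurableSet_ball
            (hv1.mono_set (ball_subset_ball hx1)) hα0 ht x
        · exact setLIntegral_diff_ball_div_norm_sub_rpow_le hv0 measurableSet_ball hv1 hα0
            hx0 x

theorem setIntegral_unitBall_div_norm_sub_rpow_le [Nontrivial E] {v : E → ℝ}
    (hv0 : ∀ y, 0 ≤ v y) (hv1 : IntegrableOn v (ball 0 1) μ) {α γ C₀ ρ : ℝ} (hα0 : 0 ≤ α)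
    (hαd : α < finrank ℝ E) (hγ : 0 ≤ γ) (hρ : ρ ≤ 1)
    (hv : ∀ y : E, 0 < ‖y‖ → ‖y‖ < ρ → v y ≤ C₀ * ‖y‖ ^ (-γ)) {x : E} (hx0 : 0 < ‖x‖)
    (hxρ : 2 * ‖x‖ < ρ) :
    ∫ y in ball 0 1, v y / ‖x - y‖ ^ α ∂μ ≤
      (2 ^ α + 1) * (∫ y in ball 0 1, v y ∂μ) * ‖x‖ ^ (-α) +
        (C₀ * 2 ^ γ * (∫ z in ball (0 : E) 1, ‖z‖ ^ (-α) ∂μ) + 1) *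
          ((∫ y in ball 0 (2 * ‖x‖), v y ∂μ) + ‖x‖) ^
            (((finrank ℝ E : ℝ) - α) / finrank ℝ E) * ‖x‖ ^ (-(γ * α / finrank ℝ E)) := by
  have hK0 : 0 ≤ ∫ z in ball (0 : E) 1, ‖z‖ ^ (-α) ∂μ :=
    setIntegral_nonneg measurableSet_ball fun z _ => by positivity
  have hm0 : 0 ≤ ∫ y in ball 0 (2 * ‖x‖), v y ∂μ :=
    setIntegral_nonneg measurableSet_ball fun y _ => hv0 y
  have hmV : ∫ y in ball 0 (2 * ‖x‖), v y ∂μ ≤ ∫ y in ball 0 1, v y ∂μ :=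
    setIntegral_mono_set hv1 (ae_of_all _ hv0) (ball_subset_ball (by linarith)).eventuallyLE
  have hV0 := hm0.trans hmV
  have hC₀ : 0 ≤ C₀ :=
    nonneg_of_mul_nonneg_left ((hv0 x).trans (hv x hx0 (by linarith))) (by positivity)
  obtain ⟨t, ht0, htx, hsum⟩ := exists_radius_balancing (γ := γ) hα0 hαd hx0 hm0 hmV hK0
    (B₀ := C₀ * 2 ^ γ) (by positivity)
  have hcore := setLIntegral_unitBall_div_norm_sub_rpow_le μ hv0 hv1 hα0 hαd hx0
    (by linarith) ht0 (le_mul_rpow_neg_of_mem_ball hγ hC₀ hv hx0 hxρ htx)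
  have hmeas : AEStronglyMeasurable (fun y => v y / ‖x - y‖ ^ α) (μ.restrict (ball 0 1)) :=
    (hv1.aemeasurable.div (by fun_prop : Measurable fun y => ‖x - y‖ ^ α).aemeasurable)
      |>.aestronglyMeasurable
  rw [integral_eq_lintegral_of_nonneg_ae
    (ae_of_all _ fun y => div_nonneg (hv0 y) (by positivity)) hmeas]
  exact ENNReal.toReal_le_of_le_ofReal (by positivity)
    (hcore.trans (ENNReal.ofReal_le_ofReal hsum))

theorem tendsto_setIntegral_ball_nhdsGT_zero [Nontrivial E] {v : E → ℝ} {a : E}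
    (hv : IntegrableAtFilter v (𝓝 a) μ) :
    Tendsto (fun r => ∫ y in ball a r, v y ∂μ) (𝓝[>] 0) (𝓝 0) := by
  obtain ⟨s, hs, hvs⟩ := hv
  obtain ⟨δ, hδ, hδs⟩ := Metric.mem_nhds_iff.1 hs
  have hball : Tendsto (fun r => μ (ball a r)) (𝓝[>] 0) (𝓝 0) := by
    have hpow : Tendsto (fun r : ℝ => ENNReal.ofReal (r ^ finrank ℝ E) * μ (ball 0 1))
        (𝓝[>] 0) (𝓝 0) := by
      have := ENNReal.Tendsto.mul_const
        (((ENNReal.continuous_ofReal.comp (continuous_pow (finrank ℝ E))).tendsto 0).mono_left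
          (nhdsWithin_le_nhds (s := Set.Ioi 0)))
        (Or.inr (measure_ball_lt_top (μ := μ) (x := 0) (r := 1)).ne)
      simpa [zero_pow finrank_pos.ne'] using this
    exact hpow.congr' (eventually_nhdsWithin_of_forall fun r hr =>
      (Measure.addHaar_ball_of_pos μ a hr).symm)
  have hrestrict : Tendsto (fun r => μ.restrict s (ball a r)) (𝓝[>] 0) (𝓝 0) :=
    tendsto_of_tendsto_of_tendsto_of_le_of_le tendsto_const_nhds hball (fun _ => zero_le)
      fun _ => Measure.restrict_apply_le _ _
  refine (hvs.tendsto_setIntegral_nhds_zero hrestrict).congr' ?_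
  filter_upwards [Ioo_mem_nhdsGT hδ] with r hr
  rw [Measure.restrict_restrict measurableSet_ball,
    Set.inter_eq_left.2 ((ball_subset_ball hr.2.le).trans hδs)]

theorem tendsto_mul_setIntegral_ball_add_norm_rpow [Nontrivial E] {v : E → ℝ}
    (hv : IntegrableAtFilter v (𝓝 0) μ) (c : ℝ) {p : ℝ} (hp : 0 < p) :
    Tendsto (fun x : E => c * ((∫ y in ball 0 (2 * ‖x‖), v y ∂μ) + ‖x‖) ^ p)
      (𝓝[≠] 0) (𝓝 0) := by
  have hradius : Tendsto (fun x : E => 2 * ‖x‖) (𝓝[≠] 0) (𝓝[>] 0) := by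
    refine tendsto_nhdsWithin_iff.2 ⟨?_, eventually_nhdsWithin_of_forall fun x hx => ?_⟩
    · simpa using (tendsto_norm_zero.const_mul 2).mono_left nhdsWithin_le_nhds
    · simpa using norm_pos_iff.2 hx
  have hsum := ((tendsto_setIntegral_ball_nhdsGT_zero μ hv).comp hradius).add
    (tendsto_norm_zero.mono_left nhdsWithin_le_nhds)
  rw [add_zero] at hsum
  simpa [Real.zero_rpow hp.ne'] using
    ((Real.continuousAt_rpow_const 0 p (Or.inr hp.le)).tendsto.comp hsum).const_mul c

end AddHaar

theorem riesz_potential_O_little_o_general (n : ℕ) (α γ : ℝ)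
    (hα : α ∈ Set.Ioo (0:ℝ) n) (hγ : 0 ≤ γ)
    (v : EuclideanSpace ℝ (Fin n) → ℝ)
    (hv1 : IntegrableOn v (ball (0 : EuclideanSpace ℝ (Fin n)) 1))
    (hv0 : ∀ y, 0 ≤ v y)
    (hO : ∃ C₀ > (0:ℝ), ∃ ρ ∈ Set.Ioo (0:ℝ) 1,
      ∀ x : EuclideanSpace ℝ (Fin n), 0 < ‖x‖ → ‖x‖ < ρ → v x ≤ C₀ * ‖x‖ ^ (-γ)) :
    ∃ C > (0:ℝ), ∃ ε : EuclideanSpace ℝ (Fin n) → ℝ,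
      Tendsto ε (𝓝[≠] (0 : EuclideanSpace ℝ (Fin n))) (𝓝 0) ∧
      ∃ ρ ∈ Set.Ioo (0:ℝ) 1,
        ∀ x : EuclideanSpace ℝ (Fin n), 0 < ‖x‖ → ‖x‖ < ρ →
          ∫ y in ball (0 : EuclideanSpace ℝ (Fin n)) 1, v y / ‖x - y‖ ^ α ≤
            C * ‖x‖ ^ (-α) + ε x * ‖x‖ ^ (-(γ * α / n)) := by
  obtain ⟨hα0, hαn⟩ := hα
  obtain ⟨C₀, -, ρ, ⟨hρ0, hρ1⟩, hv⟩ := hO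
  have : Nonempty (Fin n) := ⟨⟨0, by exact_mod_cast hα0.trans hαn⟩⟩
  have hd : finrank ℝ (EuclideanSpace ℝ (Fin n)) = n := finrank_euclideanSpace_fin
  have hV0 : 0 ≤ ∫ y in ball (0 : EuclideanSpace ℝ (Fin n)) 1, v y :=
    setIntegral_nonneg measurableSet_ball fun y _ => hv0 y
  refine ⟨(2 ^ α + 1) * (∫ y in ball (0 : EuclideanSpace ℝ (Fin n)) 1, v y) + 1, by positivity,
    _, tendsto_mul_setIntegral_ball_add_norm_rpow volume ⟨_, ball_mem_nhds 0 one_pos, hv1⟩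
      (C₀ * 2 ^ γ * (∫ z in ball (0 : EuclideanSpace ℝ (Fin n)) 1, ‖z‖ ^ (-α)) + 1)
      (p := (n - α) / n) (div_pos (by linarith) (by linarith)),
    ρ / 2, ⟨by linarith, by linarith⟩, fun x hx0 hxρ => ?_⟩
  have h := setIntegral_unitBall_div_norm_sub_rpow_le volume hv0 hv1 hα0.le (by rwa [hd]) hγ
    hρ1.le hv hx0 (by linarith)
  rw [hd] at h
  refine h.trans (add_le_add_left ?_ _)
  gcongr
  linarith

/-- If `v ∈ L¹(B₁(0))` is nonnegative with `v(x) = O(|x|^{-γ})` as `x → 0`, then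
`∫_{|y|<1} v(y)/|x-y|^α dy = O(|x|^{-α}) + o(|x|^{-γα/n})` as `x → 0`. -/
theorem riesz_potential_O_little_o (n : ℕ) (hn : 3 ≤ n) (α γ : ℝ)
    (hα : α ∈ Set.Ioo (0:ℝ) n) (hγ : 0 ≤ γ)
    (v : EuclideanSpace ℝ (Fin n) → ℝ)
    (hv1 : IntegrableOn v (ball (0 : EuclideanSpace ℝ (Fin n)) 1))
    (hv0 : ∀ y, 0 ≤ v y)
    (hO : ∃ C₀ > (0:ℝ), ∃ ρ ∈ Set.Ioo (0:ℝ) 1,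
      ∀ x : EuclideanSpace ℝ (Fin n), 0 < ‖x‖ → ‖x‖ < ρ → v x ≤ C₀ * ‖x‖ ^ (-γ)) :
    ∃ C > (0:ℝ), ∃ ε : EuclideanSpace ℝ (Fin n) → ℝ,
      Tendsto ε (𝓝[≠] (0 : EuclideanSpace ℝ (Fin n))) (𝓝 0) ∧
      ∃ ρ ∈ Set.Ioo (0:ℝ) 1,
        ∀ x : EuclideanSpace ℝ (Fin n), 0 < ‖x‖ → ‖x‖ < ρ →
          ∫ y in ball (0 : EuclideanSpace ℝ (Fin n)) 1, v y / ‖x - y‖ ^ α ≤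
            C * ‖x‖ ^ (-α) + ε x * ‖x‖ ^ (-(γ * α / n)) :=
  riesz_potential_O_little_o_general n α γ hα hγ v hv1 hv0 hO
end
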